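/- arXiv:0907.4625 — 3 statements merged into one kernel-verified Lean document; each statement's English description precedes it below -/
import Mathlib

section
/- Suppose x : ℤ → ℕ × ℕ has the property that for every g ∈ ℤ a matching index P(x,g) ∈ ℤ exists, where P(x,g) is defined as: P(x,g) = g if x(g) = (i,i); if x(g) = (i,j) with i < j, then P(x,g) = g + n where n > 0 is the least positive integer with x(g+n) = (j,i) and |{m ∈ [0,n] : x(g+m) = (i,j)}| = |{m ∈ [0,n] : x(g+m) = (j,i)}|; and if x(g) = (j,i) with i < j, then P(x,g) = g - n where n > 0 is the least positive integer with x(g-n) = (i,j) and |{m ∈ [0,n] : x(g-m) = (i,j)}| = |{m ∈ [0,n] : x(g-m) = (j,i)}|. Then P(x, ·) is an involution: P(x, P(x,g)) = g for all g ∈ ℤ. -/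
/-- The swap of a pair. -/
def swapPair (p : ℕ × ℕ) : ℕ × ℕ := (p.2, p.1)

/-- `n` is a valid forward matching distance for position `g`: `x(g+n)` is the swap of `x(g)` and
the numbers of occurrences of `x(g)` and of its swap among `x(g), x(g+1), …, x(g+n)` agree. -/
def MatchFwd (x : ℤ → ℕ × ℕ) (g : ℤ) (n : ℕ) : Prop :=
  x (g + n) = swapPair (x g) ∧
    ((Finset.range (n + 1)).filter fun m : ℕ => x (g + (m : ℤ)) = x g).card =
    ((Finset.range (n + 1)).filter fun m : ℕ => x (g + (m : ℤ)) = swapPair (x g)).card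

/-- `n` is a valid backward matching distance for position `g`. -/
def MatchBwd (x : ℤ → ℕ × ℕ) (g : ℤ) (n : ℕ) : Prop :=
  x (g - n) = swapPair (x g) ∧
    ((Finset.range (n + 1)).filter fun m : ℕ => x (g - (m : ℤ)) = swapPair (x g)).card =
    ((Finset.range (n + 1)).filter fun m : ℕ => x (g - (m : ℤ)) = x g).card

/-- `P` is the bracket-matching map of `x`: it fixes positions with diagonal label, and
sends a position labelled `(i,j)` with `i < j` (resp. `i > j`) forward (resp. backward) to the
position at the least positive distance satisfying the matching conditions. -/
def IsPairingMap (x : ℤ → ℕ × ℕ) (P : ℤ → ℤ) : Prop :=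
  (∀ g : ℤ, (x g).1 = (x g).2 → P g = g) ∧
  (∀ g : ℤ, (x g).1 < (x g).2 → ∃ n : ℕ, 0 < n ∧ MatchFwd x g n ∧
    (∀ m : ℕ, 0 < m → m < n → ¬ MatchFwd x g m) ∧ P g = g + n) ∧
  (∀ g : ℤ, (x g).2 < (x g).1 → ∃ n : ℕ, 0 < n ∧ MatchBwd x g n ∧
    (∀ m : ℕ, 0 < m → m < n → ¬ MatchBwd x g m) ∧ P g = g - n)

open Finset

lemma swapPair_swapPair (p : ℕ × ℕ) : swapPair (swapPair p) = p := rfl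

lemma card_filter_range_add (P : ℕ → Prop) [DecidablePred P] (a b : ℕ) :
    ((range (a + b)).filter P).card
      = ((range a).filter P).card + ((range b).filter fun i => P (a + i)).card := by
  simp only [Finset.card_filter]
  exact Finset.sum_range_add _ a b

lemma card_filter_reflect (Q : ℕ → Prop) [DecidablePred Q] (m : ℕ) :
    ((range (m + 1)).filter fun k => Q (m - k)).card = ((range (m + 1)).filter Q).card := by
  simp only [Finset.card_filter]
  have := Finset.sum_range_reflect (fun k => if Q k then 1 else 0) (m + 1)
  simpa using this

lemma card_filter_range_succ (P : ℕ → Prop) [DecidablePred P] (k : ℕ) :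
    ((range (k + 1)).filter P).card
      = ((range k).filter P).card + (if P k then 1 else 0) := by
  rw [Finset.range_add_one, Finset.filter_insert]
  split
  · rw [Finset.card_insert_of_notMem (by simp)]
  · simp

lemma count_shift (x : ℤ → ℕ × ℕ) (h : ℤ) (m : ℕ) (c : ℕ × ℕ) :
    ((range (m + 1)).filter fun k : ℕ => x (h - (m : ℤ) + (k : ℤ)) = c).card
      = ((range (m + 1)).filter fun k : ℕ => x (h - (k : ℤ)) = c).card := by
  rw [← card_filter_reflect (fun k => x (h - (k : ℤ)) = c) m]
  congr 1
  apply Finset.filter_congr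
  intro k hk
  simp only [mem_range, Nat.lt_succ_iff] at hk
  have e : ((m - k : ℕ) : ℤ) = (m : ℤ) - k := by
    push_cast [hk]; ring
  rw [e, show h - (m : ℤ) + (k : ℤ) = h - ((m : ℤ) - k) by ring]

lemma matchBwd_iff_matchFwd (x : ℤ → ℕ × ℕ) (h : ℤ) (m : ℕ) :
    MatchBwd x h m ↔ MatchFwd x (h - m) m := by
  unfold MatchBwd MatchFwd
  constructor
  · rintro ⟨h1, h2⟩
    have e1 : x (h - (m : ℤ) + (m : ℤ)) = swapPair (x (h - m)) := by
      rw [sub_add_cancel, h1, swapPair_swapPair]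
    refine ⟨e1, ?_⟩
    rw [count_shift, count_shift, h1, swapPair_swapPair]
    exact h2
  · rintro ⟨h1, h2⟩
    rw [sub_add_cancel] at h1
    have h1' : x (h - m) = swapPair (x h) := by rw [h1, swapPair_swapPair]
    refine ⟨h1', ?_⟩
    rw [count_shift, count_shift, h1', swapPair_swapPair] at h2
    exact h2

lemma key (x : ℤ → ℕ × ℕ) (g : ℤ) (n : ℕ) (hne : x g ≠ swapPair (x g)) (hn : 0 < n)
    (hF : MatchFwd x g n) (hmin : ∀ m, 0 < m → m < n → ¬ MatchFwd x g m) :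
    MatchBwd x (g + n) n ∧ ∀ m, 0 < m → m < n → ¬ MatchBwd x (g + n) m := by
  have claim : ∀ k, k < n →
      ((range (k + 1)).filter fun m : ℕ => x (g + (m : ℤ)) = swapPair (x g)).card
        < ((range (k + 1)).filter fun m : ℕ => x (g + (m : ℤ)) = x g).card := by
    intro k
    induction k with
    | zero =>
      intro _
      simp [Finset.range_one, Finset.filter_singleton, hne]
    | succ k ih =>
      intro hk1
      have ihk := ih (by omega)
      have sa := card_filter_range_succ (fun m : ℕ => x (g + (m : ℤ)) = x g) (k + 1)
      have sb := card_filter_range_succ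
        (fun m : ℕ => x (g + (m : ℤ)) = swapPair (x g)) (k + 1)
      rw [sa, sb]
      by_cases hx : x (g + ((k + 1 : ℕ) : ℤ)) = swapPair (x g)
      · have hxa : ¬ x (g + ((k + 1 : ℕ) : ℤ)) = x g := by
          rw [hx]; exact fun e => hne e.symm
        have hnecard : ((range (k + 1 + 1)).filter fun m : ℕ => x (g + (m : ℤ)) = x g).card
            ≠ ((range (k + 1 + 1)).filter fun m : ℕ =>
                x (g + (m : ℤ)) = swapPair (x g)).card :=
          fun hcc => hmin (k + 1) (by omega) hk1 ⟨hx, hcc⟩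
        rw [sa, sb, if_pos hx, if_neg hxa] at hnecard
        rw [if_pos hx, if_neg hxa]
        omega
      · rw [if_neg hx]
        by_cases hxa : x (g + ((k + 1 : ℕ) : ℤ)) = x g
        · rw [if_pos hxa]; omega
        · rw [if_neg hxa]; omega
  have hb : x (g + (n : ℤ)) = swapPair (x g) := hF.1
  constructor
  · constructor
    · rw [show g + (n : ℤ) - (n : ℤ) = g by ring, hb, swapPair_swapPair]
    · rw [← count_shift x (g + n) n, ← count_shift x (g + n) n]
      simp only [show g + (n : ℤ) - (n : ℤ) = g by ring]
      rw [hb, swapPair_swapPair]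
      exact hF.2
  · intro m hm0 hmn hB
    rw [matchBwd_iff_matchFwd] at hB
    have hxa : x (g + (n : ℤ) - (m : ℤ)) = x g := by
      have h1 := hB.1
      rw [sub_add_cancel, hb] at h1
      have h2 := congrArg swapPair h1
      rw [swapPair_swapPair, swapPair_swapPair] at h2
      exact h2.symm
    have hw := hB.2
    rw [hxa] at hw
    have ecast : ∀ i : ℕ, g + (((n - m) + i : ℕ) : ℤ) = g + (n : ℤ) - (m : ℤ) + (i : ℤ) := by
      intro i; push_cast [Nat.le_of_lt hmn]; ring
    have hsa := card_filter_range_add (fun k : ℕ => x (g + (k : ℤ)) = x g) (n - m) (m + 1)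
    have hsb := card_filter_range_add
      (fun k : ℕ => x (g + (k : ℤ)) = swapPair (x g)) (n - m) (m + 1)
    rw [show n - m + (m + 1) = n + 1 by omega] at hsa hsb
    simp only [ecast] at hsa hsb
    have hcl := claim (n - m - 1) (by omega)
    rw [show n - m - 1 + 1 = n - m by omega] at hcl
    have htot := hF.2
    omega

lemma matchFwd_neg (x : ℤ → ℕ × ℕ) (h : ℤ) (m : ℕ) :
    MatchFwd (fun t => x (-t)) h m ↔ MatchBwd x (-h) m := by
  have e : ∀ k : ℕ, -(h + (k : ℤ)) = -h - (k : ℤ) := by intro k; ring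
  unfold MatchFwd MatchBwd
  simp only [e]
  exact ⟨fun ⟨h1, h2⟩ => ⟨h1, h2.symm⟩, fun ⟨h1, h2⟩ => ⟨h1, h2.symm⟩⟩

lemma matchBwd_neg (x : ℤ → ℕ × ℕ) (h : ℤ) (m : ℕ) :
    MatchBwd (fun t => x (-t)) h m ↔ MatchFwd x (-h) m := by
  have e : ∀ k : ℕ, -(h - (k : ℤ)) = -h + (k : ℤ) := by intro k; ring
  unfold MatchFwd MatchBwd
  simp only [e]
  exact ⟨fun ⟨h1, h2⟩ => ⟨h1, h2.symm⟩, fun ⟨h1, h2⟩ => ⟨h1, h2.symm⟩⟩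

lemma key_bwd (x : ℤ → ℕ × ℕ) (g : ℤ) (n : ℕ) (hne : x g ≠ swapPair (x g)) (hn : 0 < n)
    (hB : MatchBwd x g n) (hmin : ∀ m, 0 < m → m < n → ¬ MatchBwd x g m) :
    MatchFwd x (g - n) n ∧ ∀ m, 0 < m → m < n → ¬ MatchFwd x (g - n) m := by
  have h1 : MatchFwd (fun t => x (-t)) (-g) n := by
    rw [matchFwd_neg]; simpa using hB
  have h2 : ∀ m, 0 < m → m < n → ¬ MatchFwd (fun t => x (-t)) (-g) m := by
    intro m hm hmn hc
    rw [matchFwd_neg] at hc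
    exact hmin m hm hmn (by simpa using hc)
  obtain ⟨hB', hmin'⟩ := key (fun t => x (-t)) (-g) n (by simpa using hne) hn h1 h2
  have e : -(-g + (n : ℤ)) = g - n := by ring
  constructor
  · have := (matchBwd_neg x (-g + n) n).mp hB'
    rwa [e] at this
  · intro m hm hmn hc
    refine hmin' m hm hmn ?_
    rw [matchBwd_neg, e]
    exact hc

/-- if the matching index `P(x,g)` is well-defined for every `g ∈ ℤ`, then
`P(x,·)` is an involution: `P(x,P(x,g)) = g`. -/
theorem stmt3 (x : ℤ → ℕ × ℕ) (P : ℤ → ℤ) (hP : IsPairingMap x P) :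
    ∀ g : ℤ, P (P g) = g := by
  obtain ⟨hdiag, hlt, hgt⟩ := hP
  intro g
  rcases lt_trichotomy (x g).1 (x g).2 with h | h | h
  · obtain ⟨n, hn, hF, hmin, hPg⟩ := hlt g h
    have hne : x g ≠ swapPair (x g) := by
      intro e
      have : (x g).1 = (x g).2 := congrArg Prod.fst e
      omega
    obtain ⟨hB, hBmin⟩ := key x g n hne hn hF hmin
    have hx2 : (x (g + n)).2 < (x (g + n)).1 := by
      rw [hF.1]; exact h
    obtain ⟨n', hn', hB', hmin', hPg'⟩ := hgt (g + n) hx2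
    have hnn : n' = n := by
      by_contra hne2
      rcases Nat.lt_trichotomy n' n with h2 | h2 | h2
      · exact hBmin n' hn' h2 hB'
      · exact hne2 h2
      · exact hmin' n hn h2 hB
    rw [hPg, hPg', hnn]; ring
  · rw [hdiag g h, hdiag g h]
  · obtain ⟨n, hn, hBw, hmin, hPg⟩ := hgt g h
    have hne : x g ≠ swapPair (x g) := by
      intro e
      have : (x g).1 = (x g).2 := congrArg Prod.fst e
      omega
    obtain ⟨hF, hFmin⟩ := key_bwd x g n hne hn hBw hmin
    have hx1 : (x (g - n)).1 < (x (g - n)).2 := by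
      rw [hBw.1]; exact h
    obtain ⟨n', hn', hF', hmin', hPg'⟩ := hlt (g - n) hx1
    have hnn : n' = n := by
      by_contra hne2
      rcases Nat.lt_trichotomy n' n with h2 | h2 | h2
      · exact hFmin n' hn' h2 hF'
      · exact hne2 h2
      · exact hmin' n hn h2 hF
    rw [hPg, hPg', hnn]; ring
end

section
/- Let Γ = (V, E) be a tree (a connected acyclic simple graph), let (u,v) ∈ E, and let u', v' ∈ V be such that u' lies in the connected component of u and v' lies in the connected component of v in the graph Γ' obtained from Γ by deleting the edge (u,v). Then the graph obtained from Γ' by adding the edge (u',v') is a tree. -/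
/-- let Γ be a tree, (u,v) an edge of Γ, and let u' (resp. v') lie in the
connected component of u (resp. of v) of the graph Γ' obtained by deleting the edge (u,v).
Then adding the edge (u',v') to Γ' yields a tree. -/
theorem stmt7 {V : Type*} (G : SimpleGraph V) (hG : G.IsTree) (u v u' v' : V)
    (huv : G.Adj u v)
    (hu' : (G.deleteEdges {s(u, v)}).Reachable u u')
    (hv' : (G.deleteEdges {s(u, v)}).Reachable v v') :
    (G.deleteEdges {s(u, v)} ⊔ SimpleGraph.fromEdgeSet {s(u', v')}).IsTree := by
  classical
  set G' := G.deleteEdges {s(u, v)} with hG'def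
  set H := G' ⊔ SimpleGraph.fromEdgeSet {s(u', v')} with hHdef
  -- the edge (u,v) is a bridge of G
  have hbridge : ¬ G'.Reachable u v := by
    have hb : G.IsBridge s(u, v) :=
      (SimpleGraph.isAcyclic_iff_forall_adj_isBridge.mp hG.IsAcyclic) huv
    exact SimpleGraph.isBridge_iff.mp hb
  have hne : u' ≠ v' := by
    rintro rfl
    exact hbridge (hu'.trans hv'.symm)
  have hadjH : H.Adj u' v' := by
    rw [hHdef, SimpleGraph.sup_adj, SimpleGraph.fromEdgeSet_adj]
    exact Or.inr ⟨rfl, hne⟩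
  have hGle : G' ≤ G := by
    intro a b hab; exact (SimpleGraph.deleteEdges_adj.mp hab).1
  -- every vertex is reachable in G' from u or from v
  have key : ∀ a b : V, G.Walk a b →
      (G'.Reachable u a ∨ G'.Reachable v a) →
      (G'.Reachable u b ∨ G'.Reachable v b) := by
    intro a b p
    induction p with
    | nil => exact id
    | @cons a c b h q ih =>
      intro ha
      apply ih
      by_cases hs : s(a, c) = s(u, v)
      · rcases Sym2.eq_iff.mp hs with ⟨rfl, rfl⟩ | ⟨rfl, rfl⟩
        · exact Or.inr (SimpleGraph.Reachable.refl _)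
        · exact Or.inl (SimpleGraph.Reachable.refl _)
      · have hac : G'.Adj a c := by
          rw [hG'def, SimpleGraph.deleteEdges_adj]
          exact ⟨h, by simpa using hs⟩
        rcases ha with ha | ha
        · exact Or.inl (ha.trans hac.reachable)
        · exact Or.inr (ha.trans hac.reachable)
  have reach : ∀ w : V, G'.Reachable u w ∨ G'.Reachable v w := by
    intro w
    obtain ⟨p⟩ := hG.isConnected.preconnected u w
    exact key u w p (Or.inl (SimpleGraph.Reachable.refl _))
  have hG'leH : G' ≤ H := le_sup_left
  -- H is connected
  have hreachH : ∀ w : V, H.Reachable u' w := by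
    intro w
    rcases reach w with hw | hw
    · exact ((hu'.symm.trans hw).mono hG'leH)
    · exact (hadjH.reachable.trans (((hv'.symm.trans hw)).mono hG'leH))
  have hconn : H.Connected := by
    have : Nonempty V := ⟨u⟩
    exact SimpleGraph.Connected.mk (fun a b => (hreachH a).symm.trans (hreachH b))
  refine ⟨hconn, ?_⟩
  -- H is acyclic
  intro a c hc
  by_cases he : s(u', v') ∈ c.edges
  · -- the cycle uses the new edge, giving a u'-v' walk avoiding it, hence
    -- reachability in G', hence u ~ v in G', contradiction
    have hnb : ¬ H.IsBridge s(u', v') := by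
      rw [SimpleGraph.isBridge_iff_adj_and_forall_cycle_notMem hadjH]
      push_neg
      exact ⟨a, c, hc, he⟩
    rw [SimpleGraph.isBridge_iff] at hnb
    push_neg at hnb
    have hr : (H \ SimpleGraph.fromEdgeSet {s(u', v')}).Reachable u' v' := hnb
    have hle : (H \ SimpleGraph.fromEdgeSet {s(u', v')}) ≤ G' := by
      intro x y hxy
      rw [SimpleGraph.sdiff_adj, hHdef, SimpleGraph.sup_adj] at hxy
      tauto
    have : G'.Reachable u v := hu'.trans ((hr.mono hle).trans hv'.symm)
    exact hbridge this
  · -- the cycle avoids the new edge, so it lives in G' ≤ G, contradicting acyclicity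
    have hedges : ∀ e ∈ c.edges, e ∈ G.edgeSet := by
      intro e hee
      have := c.edges_subset_edgeSet hee
      rw [hHdef, SimpleGraph.edgeSet_sup, SimpleGraph.edgeSet_fromEdgeSet] at this
      rcases this with h1 | h1
      · exact (SimpleGraph.edgeSet_mono hGle) h1
      · exact absurd (h1.1 ▸ hee) (by simpa [Set.mem_singleton_iff.mp h1.1] using he)
    exact hG.IsAcyclic (c.transfer G hedges) (hc.transfer hedges)
end

section
/- Let W ⊆ F₂ = ⟨a,b⟩ be a right-connected subset (i.e., the subgraph of the right Cayley graph with respect to {a,b} induced on W is connected) with Wa = W and e ∈ W, and let g ∈ W. Then W ∪ gb⟨a⟩ and W ∪ gb⁻¹⟨a⟩ are right-connected, satisfy closure under right multiplication by a, and contain e. Moreover, F₂ is the union of an increasing sequence W₀ = ⟨a⟩ ⊆ W₁ ⊆ W₂ ⊆ ... of such sets, where each W_{n+1} is obtained from W_n by adjoining a single coset g b^{±1}⟨a⟩ for some g ∈ W_n. -/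
abbrev F2 : Type := FreeGroup (Fin 2)

/-- The generator `a` of F₂. -/
abbrev aGen : F2 := FreeGroup.of (0 : Fin 2)

/-- The generator `b` of F₂. -/
abbrev bGen : F2 := FreeGroup.of (1 : Fin 2)

/-- One step in the right Cayley graph of F₂ with respect to `{a,b}`, staying inside `W`. -/
def CayleyStep (W : Set F2) (g h : F2) : Prop :=
  g ∈ W ∧ h ∈ W ∧ (h = g * aGen ∨ h = g * bGen ∨ g = h * aGen ∨ g = h * bGen)

/-- `W` is right-connected: any two of its elements are joined by a path in the subgraph of
the right Cayley graph induced on `W`. -/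
def RightConnected (W : Set F2) : Prop :=
  ∀ g ∈ W, ∀ h ∈ W, Relation.ReflTransGen (CayleyStep W) g h

/-- The coset `g⟨a⟩ = {g aⁿ : n ∈ ℤ}`. -/
def aCoset (g : F2) : Set F2 := {x | ∃ n : ℤ, x = g * aGen ^ n}

noncomputable section
open Relation

/-- `b^ε`. -/
def bp (ε : Bool) : F2 := if ε then bGen else bGen⁻¹

lemma cayleyStep_symm (V : Set F2) : Symmetric (CayleyStep V) := by
  rintro g h ⟨hg, hh, hor⟩
  exact ⟨hh, hg, by tauto⟩

lemma cayleyStep_mono {V V' : Set F2} (hVV : V ⊆ V') {g h : F2}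
    (hs : CayleyStep V g h) : CayleyStep V' g h :=
  ⟨hVV hs.1, hVV hs.2.1, hs.2.2⟩

lemma mem_aCoset_self (c : F2) : c ∈ aCoset c := ⟨0, by simp⟩

lemma aCoset_mul_zpow (c : F2) (n : ℤ) : c * aGen ^ n ∈ aCoset c := ⟨n, rfl⟩

lemma coset_path {V : Set F2} {c : F2} (hc : aCoset c ⊆ V) (n : ℤ) :
    ReflTransGen (CayleyStep V) (c * aGen ^ n) c := by
  induction n using Int.induction_on with
  | zero => simpa using ReflTransGen.refl
  | succ n ih =>
      refine ReflTransGen.head ⟨hc ⟨(n : ℤ) + 1, rfl⟩, hc ⟨(n : ℤ), rfl⟩, ?_⟩ ih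
      right; right; left
      rw [zpow_add_one, mul_assoc]
  | pred n ih =>
      refine ReflTransGen.head ⟨hc ⟨-(n : ℤ) - 1, rfl⟩, hc ⟨-(n : ℤ), rfl⟩, ?_⟩ ih
      left
      rw [mul_assoc, ← zpow_add_one]
      norm_num

lemma image_aCoset (c : F2) : (fun w => w * aGen) '' aCoset c = aCoset c := by
  ext x
  constructor
  · rintro ⟨y, ⟨n, rfl⟩, rfl⟩
    refine ⟨n + 1, ?_⟩
    show c * aGen ^ n * aGen = c * aGen ^ (n + 1)
    rw [zpow_add_one, mul_assoc]
  · rintro ⟨n, rfl⟩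
    refine ⟨c * aGen ^ (n - 1), ⟨n - 1, rfl⟩, ?_⟩
    show c * aGen ^ (n - 1) * aGen = c * aGen ^ n
    rw [mul_assoc, ← zpow_add_one]
    norm_num

lemma aClosed_zpow {W : Set F2} (hW : (fun w => w * aGen) '' W = W)
    {w : F2} (hw : w ∈ W) (n : ℤ) : w * aGen ^ n ∈ W := by
  induction n using Int.induction_on with
  | zero => simpa using hw
  | succ n ih =>
      rw [zpow_add_one, ← mul_assoc]
      rw [← hW]
      exact ⟨_, ih, rfl⟩
  | pred n ih =>
      rw [← hW] at ih
      obtain ⟨u, hu, hue⟩ := ih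
      have : u = w * aGen ^ (-(n : ℤ) - 1) := by
        have : u = w * aGen ^ (-(n : ℤ)) * aGen⁻¹ := by
          rw [← hue]; group
        rw [this, mul_assoc, ← zpow_sub_one]
      rwa [← this]

/-- The key lemma: adding a `b^ε`-translated `a`-coset. -/
lemma key_s19 {W : Set F2} (hconn : RightConnected W)
    (hcl : (fun w => w * aGen) '' W = W) (h1 : (1 : F2) ∈ W)
    {g : F2} (hg : g ∈ W) (ε : Bool) :
    RightConnected (W ∪ aCoset (g * bp ε)) ∧
    (fun w => w * aGen) '' (W ∪ aCoset (g * bp ε)) = W ∪ aCoset (g * bp ε) ∧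
    (1 : F2) ∈ W ∪ aCoset (g * bp ε) := by
  set c := g * bp ε with hc
  set V := W ∪ aCoset c with hV
  have hWV : W ⊆ V := Set.subset_union_left
  have hCV : aCoset c ⊆ V := Set.subset_union_right
  have hcg : CayleyStep V c g := by
    refine ⟨hCV (mem_aCoset_self c), hWV hg, ?_⟩
    cases ε with
    | true => right; right; right; simpa [bp] using hc
    | false =>
        right; left
        rw [hc]; simp [bp]
  have conn_to_g : ∀ z ∈ V, ReflTransGen (CayleyStep V) z g := by
    rintro z (hz | ⟨n, rfl⟩)
    · exact ReflTransGen.mono (fun _ _ => cayleyStep_mono hWV) z g (hconn z hz g hg)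
    · exact (coset_path hCV n).tail hcg
  refine ⟨?_, ?_, Or.inl h1⟩
  · intro x hx y hy
    exact (conn_to_g x hx).trans
      ((@ReflTransGen.stdSymm _ _ ⟨fun _ _ h => cayleyStep_symm V h⟩).symm _ _ (conn_to_g y hy))
  · rw [hV, Set.image_union, hcl, image_aCoset]

/-- A surjection from ℕ onto addresses. -/
def addrSurj : ℕ → List (ℤ × Bool) :=
  (exists_surjective_nat (List (ℤ × Bool))).choose

lemma addrSurj_surj : Function.Surjective addrSurj :=
  (exists_surjective_nat (List (ℤ × Bool))).choose_spec

/-- The group element associated to an address. -/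
def gAddr : List (ℤ × Bool) → F2
  | [] => 1
  | (k, ε) :: t => gAddr t * aGen ^ k * bp ε

def Lser (n : ℕ) : List (ℤ × Bool) := addrSurj (Nat.unpair n).2

open Classical in
/-- One move: adjoin the coset given by the address if legal, else a stall move. -/
def move (W : Set F2) : List (ℤ × Bool) → Set F2
  | [] => W ∪ aCoset (1 * bp true)
  | (k, ε) :: t =>
      if gAddr t * aGen ^ k ∈ W then W ∪ aCoset (gAddr t * aGen ^ k * bp ε)
      else W ∪ aCoset (1 * bp true)

def Wseq : ℕ → Set F2
  | 0 => aCoset 1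
  | n + 1 => move (Wseq n) (Lser n)

lemma move_spec (W : Set F2) (h1 : (1 : F2) ∈ W) (l : List (ℤ × Bool)) :
    ∃ g ∈ W, ∃ ε : Bool, move W l = W ∪ aCoset (g * bp ε) := by
  cases l with
  | nil => exact ⟨1, h1, true, rfl⟩
  | cons p t =>
      obtain ⟨k, ε⟩ := p
      by_cases h : gAddr t * aGen ^ k ∈ W
      · exact ⟨_, h, ε, by simp [move, h]⟩
      · exact ⟨1, h1, true, by simp [move, h]⟩

lemma wseq_inv (n : ℕ) : RightConnected (Wseq n) ∧
    (fun w => w * aGen) '' Wseq n = Wseq n ∧ (1 : F2) ∈ Wseq n := by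
  induction n with
  | zero =>
      refine ⟨?_, image_aCoset 1, mem_aCoset_self 1⟩
      rintro x ⟨m, rfl⟩ y ⟨k, rfl⟩
      exact (coset_path subset_rfl m).trans
        ((@ReflTransGen.stdSymm _ _ ⟨fun _ _ h => cayleyStep_symm _ h⟩).symm _ _ (coset_path subset_rfl k))
  | succ n ih =>
      obtain ⟨hconn, hcl, h1⟩ := ih
      obtain ⟨g, hg, ε, he⟩ := move_spec (Wseq n) h1 (Lser n)
      show RightConnected (move (Wseq n) (Lser n)) ∧
        (fun w => w * aGen) '' move (Wseq n) (Lser n) = move (Wseq n) (Lser n) ∧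
        (1 : F2) ∈ move (Wseq n) (Lser n)
      rw [he]
      exact key_s19 hconn hcl h1 hg ε

lemma wseq_succ_subset (n : ℕ) : Wseq n ⊆ Wseq (n + 1) := by
  obtain ⟨g, hg, ε, he⟩ := move_spec (Wseq n) (wseq_inv n).2.2 (Lser n)
  show Wseq n ⊆ move (Wseq n) (Lser n)
  rw [he]
  exact Set.subset_union_left

lemma wseq_mono {m n : ℕ} (h : m ≤ n) : Wseq m ⊆ Wseq n := by
  induction h with
  | refl => exact subset_rfl
  | step h ih => exact ih.trans (wseq_succ_subset _)

lemma addr_covered (l : List (ℤ × Bool)) : ∃ n, aCoset (gAddr l) ⊆ Wseq n := by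
  induction l with
  | nil =>
      refine ⟨0, ?_⟩
      rw [show gAddr [] = 1 from rfl, Wseq]
  | cons p t ih =>
      obtain ⟨k, ε⟩ := p
      obtain ⟨m, hm⟩ := ih
      obtain ⟨j, hj⟩ := addrSurj_surj ((k, ε) :: t)
      set n := Nat.pair m j with hn
      have hmn : m ≤ n := Nat.left_le_pair m j
      have hmem : gAddr t * aGen ^ k ∈ Wseq n :=
        wseq_mono hmn (hm (aCoset_mul_zpow _ k))
      refine ⟨n + 1, ?_⟩
      have hL : Lser n = (k, ε) :: t := by
        rw [Lser, hn, Nat.unpair_pair, hj]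
      show aCoset (gAddr ((k, ε) :: t)) ⊆ move (Wseq n) (Lser n)
      rw [hL, show gAddr ((k, ε) :: t) = gAddr t * aGen ^ k * bp ε from rfl]
      simp [move, hmem]

lemma single_letter (i : Fin 2) (β : Bool) :
    FreeGroup.mk [(i, β)] = if β then FreeGroup.of i else (FreeGroup.of i)⁻¹ := by
  cases β <;> simp [FreeGroup.of, FreeGroup.inv_mk, FreeGroup.invRev]

lemma mem_some_coset (x : F2) : ∃ l : List (ℤ × Bool), ∃ k : ℤ,
    x = gAddr l * aGen ^ k := by
  have main : ∀ L : List (Fin 2 × Bool), ∃ l : List (ℤ × Bool), ∃ k : ℤ,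
      FreeGroup.mk L = gAddr l * aGen ^ k := by
    intro L
    induction L using List.reverseRecOn with
    | nil => exact ⟨[], 0, by simp [show gAddr [] = 1 from rfl, ← FreeGroup.one_eq_mk]⟩
    | append_singleton L p ih =>
        obtain ⟨i, β⟩ := p
        obtain ⟨l, k, hk⟩ := ih
        have hmul : FreeGroup.mk (L ++ [(i, β)]) =
            FreeGroup.mk L * FreeGroup.mk [(i, β)] := (FreeGroup.mul_mk).symm
        fin_cases i
        · -- letter a^{±1}
          refine ⟨l, if β then k + 1 else k - 1, ?_⟩
          rw [hmul, hk, single_letter]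
          cases β
          · simp [mul_assoc, ← zpow_sub_one]
          · simp [mul_assoc, ← zpow_add_one]
        · -- letter b^{±1}
          refine ⟨(k, β) :: l, 0, ?_⟩
          rw [hmul, hk, single_letter,
            show gAddr ((k, β) :: l) = gAddr l * aGen ^ k * bp β from rfl]
          cases β <;> simp [bp]
  obtain ⟨l, k, hk⟩ := main x.toWord
  exact ⟨l, k, by rw [← FreeGroup.mk_toWord (x := x), hk]⟩

end

/-- if `W ⊆ F₂` is right-connected, `Wa = W` and `e ∈ W`, then for any `g ∈ W`
both `W ∪ gb⟨a⟩` and `W ∪ gb⁻¹⟨a⟩` are right-connected, closed under right multiplication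
by `a`, and contain `e`. Moreover `F₂` is the union of an increasing sequence
`W₀ = ⟨a⟩ ⊆ W₁ ⊆ W₂ ⊆ ⋯` of such sets, where each `W_{n+1}` is obtained from `W_n` by
adjoining a single coset `g b^{±1} ⟨a⟩` with `g ∈ W_n`. -/

theorem stmt19 :
    (∀ W : Set F2, RightConnected W → (fun w => w * aGen) '' W = W → (1 : F2) ∈ W →
      ∀ g ∈ W, ∀ ε : Bool,
        RightConnected (W ∪ aCoset (g * (if ε then bGen else bGen⁻¹))) ∧
        (fun w => w * aGen) '' (W ∪ aCoset (g * (if ε then bGen else bGen⁻¹))) =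
          W ∪ aCoset (g * (if ε then bGen else bGen⁻¹)) ∧
        (1 : F2) ∈ W ∪ aCoset (g * (if ε then bGen else bGen⁻¹))) ∧
    ∃ Wseq : ℕ → Set F2,
      Wseq 0 = aCoset 1 ∧
      (∀ n, Wseq n ⊆ Wseq (n + 1)) ∧
      (∀ n, RightConnected (Wseq n) ∧ (fun w => w * aGen) '' Wseq n = Wseq n ∧
        (1 : F2) ∈ Wseq n) ∧
      (∀ n, ∃ g ∈ Wseq n, ∃ ε : Bool,
        Wseq (n + 1) = Wseq n ∪ aCoset (g * (if ε then bGen else bGen⁻¹))) ∧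
      ⋃ n, Wseq n = Set.univ := by
  constructor
  · intro W hconn hcl h1 g hg ε
    exact key_s19 hconn hcl h1 hg ε
  · refine ⟨Wseq, rfl, wseq_succ_subset, wseq_inv, ?_, ?_⟩
    · intro n
      obtain ⟨g, hg, ε, he⟩ := move_spec (Wseq n) (wseq_inv n).2.2 (Lser n)
      exact ⟨g, hg, ε, he⟩
    · ext x
      simp only [Set.mem_iUnion, Set.mem_univ, iff_true]
      obtain ⟨l, k, rfl⟩ := mem_some_coset x
      obtain ⟨n, hn⟩ := addr_covered l
      exact ⟨n, hn (aCoset_mul_zpow _ k)⟩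
end
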